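/- For every α ∈ (0,2) and every s > 0, the integral ∫₀^∞ (1+r²)^{−1}·log( (1 − r^α s^α)/(1 − r² s²) ) dr is well-defined (the integrand extends continuously across the removable singularity at r = 1/s, where the ratio tends to α/2) and is ≤ 0. -/
import Mathlib


open MeasureTheory Real Set
open scoped ENNReal NNReal

private lemma ratio_mem {α : ℝ} (hα : α ∈ Set.Ioo (0 : ℝ) 2) {t : ℝ} (ht : 0 ≤ t)
    (ht1 : t ≠ 1) : (1 - t ^ α) / (1 - t ^ 2) ∈ Set.Ioc (0 : ℝ) 1 := by
  obtain ⟨hα0, hα2⟩ := hα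
  rcases eq_or_lt_of_le ht with h0 | h0
  · simp [← h0, Real.zero_rpow (ne_of_gt hα0)]
  rcases lt_or_gt_of_ne ht1 with hlt | hgt
  · have h1 : t ^ α < 1 := Real.rpow_lt_one ht hlt hα0
    have h2 : t ^ (2:ℝ) ≤ t ^ α := Real.rpow_le_rpow_of_exponent_ge h0 hlt.le hα2.le
    rw [show t ^ (2:ℝ) = t ^ 2 by rw [← Real.rpow_natCast t 2]; norm_num] at h2
    have h3 : t ^ 2 < 1 := by nlinarith
    constructor
    · exact div_pos (by linarith) (by linarith)
    · exact div_le_one_of_le₀ (by linarith) (by linarith)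
  · have h1 : 1 < t ^ α := by
      rw [Real.one_lt_rpow_iff (by linarith)]; exact Or.inl ⟨hgt, hα0⟩
    have h2 : t ^ α ≤ t ^ (2:ℝ) := Real.rpow_le_rpow_of_exponent_le hgt.le hα2.le
    rw [show t ^ (2:ℝ) = t ^ 2 by rw [← Real.rpow_natCast t 2]; norm_num] at h2
    have h3 : 1 < t ^ 2 := by nlinarith
    rw [show (1 - t ^ α) / (1 - t ^ 2) = (t ^ α - 1) / (t ^ 2 - 1) by
      rw [← neg_div_neg_eq]; ring_nf]
    constructor
    · exact div_pos (by linarith) (by linarith)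
    · exact div_le_one_of_le₀ (by linarith) (by linarith)

private lemma ratio_mem' {α : ℝ} (hα : α ∈ Set.Ioo (0 : ℝ) 2) {t : ℝ} (ht : 0 ≤ t) :
    (1 - t ^ α) / (1 - t ^ 2) ∈ Set.Icc (0 : ℝ) 1 := by
  rcases eq_or_ne t 1 with rfl | ht1
  · simp
  · exact ⟨(ratio_mem hα ht ht1).1.le, (ratio_mem hα ht ht1).2⟩

private lemma ratio_tendsto {α : ℝ} (hα : α ∈ Set.Ioo (0 : ℝ) 2) :
    Filter.Tendsto (fun t : ℝ => (1 - t ^ α) / (1 - t ^ 2))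
      (nhdsWithin 1 {t : ℝ | t ≠ 1}) (nhds (α / 2)) := by
  have h1 : HasDerivAt (fun x : ℝ => x ^ α) α 1 := by
    have := Real.hasDerivAt_rpow_const (x := 1) (p := α) (Or.inl one_ne_zero)
    simpa using this
  have h2 : HasDerivAt (fun x : ℝ => x ^ 2) (2 : ℝ) 1 := by
    simpa using hasDerivAt_pow 2 (1 : ℝ)
  have t1 := hasDerivAt_iff_tendsto_slope.mp h1
  have t2 := hasDerivAt_iff_tendsto_slope.mp h2
  have hdiv := t1.div t2 (by norm_num)
  refine hdiv.congr' ?_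
  filter_upwards [self_mem_nhdsWithin] with t ht
  have hd : t - 1 ≠ 0 := sub_ne_zero.mpr ht
  show slope (fun x : ℝ => x ^ α) 1 t / slope (fun x : ℝ => x ^ 2) 1 t
      = (1 - t ^ α) / (1 - t ^ 2)
  rw [slope_def_field, slope_def_field, Real.one_rpow, one_pow,
    div_div_div_cancel_right₀ hd, ← neg_div_neg_eq]
  ring_nf

private noncomputable def hfun (α : ℝ) : ℝ → ℝ :=
  fun t => if t = 1 then α / 2 else (1 - t ^ α) / (1 - t ^ 2)

private lemma hfun_pos {α : ℝ} (hα : α ∈ Set.Ioo (0 : ℝ) 2) {t : ℝ} (ht : 0 ≤ t) :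
    0 < hfun α t := by
  unfold hfun
  split_ifs with h
  · linarith [hα.1]
  · exact (ratio_mem hα ht h).1

private lemma hfun_le_one {α : ℝ} (hα : α ∈ Set.Ioo (0 : ℝ) 2) {t : ℝ} (ht : 0 ≤ t) :
    hfun α t ≤ 1 := by
  unfold hfun
  split_ifs with h
  · linarith [hα.2]
  · exact (ratio_mem hα ht h).2

private lemma hfun_continuousOn {α : ℝ} (hα : α ∈ Set.Ioo (0 : ℝ) 2) :
    ContinuousOn (hfun α) (Set.Ici 0) := by
  intro t ht
  rcases eq_or_ne t 1 with rfl | ht1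
  · refine ContinuousAt.continuousWithinAt ?_
    unfold ContinuousAt
    rw [show hfun α 1 = α / 2 by simp [hfun]]
    rw [← nhdsNE_sup_pure, Filter.tendsto_sup]
    constructor
    · refine (ratio_tendsto hα).congr' ?_
      filter_upwards [self_mem_nhdsWithin] with u hu
      simp only [hfun, if_neg (by exact hu)]
    · simpa [hfun] using tendsto_pure_nhds (hfun α) 1
  · refine ContinuousAt.continuousWithinAt ?_
    have ht0 : (0:ℝ) ≤ t := ht
    have hden : 1 - t ^ 2 ≠ 0 := by
      rcases lt_or_gt_of_ne ht1 with h | h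
      · nlinarith
      · nlinarith
    have hc : ContinuousAt (fun u : ℝ => (1 - u ^ α) / (1 - u ^ 2)) t := by
      refine ContinuousAt.div ?_ ?_ hden
      · exact continuousAt_const.sub (Real.continuousAt_rpow_const t α (Or.inr hα.1.le))
      · exact continuousAt_const.sub ((continuous_pow 2).continuousAt)
    refine hc.congr ?_
    filter_upwards [(isOpen_compl_singleton (x := (1:ℝ))).mem_nhds ht1] with u hu
    simp only [hfun]
    rw [if_neg (show u ≠ 1 from hu)]

private lemma G_contOn {α s : ℝ} (hα : α ∈ Set.Ioo (0 : ℝ) 2) (hs : 0 < s) :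
    ContinuousOn (fun r : ℝ => (1 + r ^ 2)⁻¹ * Real.log (hfun α (r * s))) (Set.Ici 0) := by
  refine ContinuousOn.mul ?_ ?_
  · have h : ∀ r : ℝ, (1:ℝ) + r ^ 2 ≠ 0 := fun r => by positivity
    exact ((continuous_const.add (continuous_pow 2)).inv₀ h).continuousOn
  · refine ContinuousOn.log ?_ ?_
    · exact (hfun_continuousOn hα).comp (continuous_mul_right s).continuousOn
        (fun r hr => mul_nonneg hr hs.le)
    · exact fun r hr => (hfun_pos hα (mul_nonneg hr hs.le)).ne'

private lemma hfun_tail_bound {α : ℝ} (hα : α ∈ Set.Ioo (0 : ℝ) 2) {t : ℝ}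
    (ht2 : 2 ≤ t) (htα : 2 ≤ t ^ α) :
    -Real.log (hfun α t) ≤ Real.log 2 + 2 * Real.log t := by
  have ht1 : (1:ℝ) < t := by linarith
  have ht0 : (0:ℝ) < t := by linarith
  have hsq : (1:ℝ) < t ^ 2 := by nlinarith
  have hval : hfun α t = (t ^ α - 1) / (t ^ 2 - 1) := by
    simp only [hfun]
    rw [if_neg (ne_of_gt ht1), ← neg_div_neg_eq]; ring_nf
  have hlow : (t ^ α / 2) / t ^ 2 ≤ hfun α t := by
    rw [hval]
    exact div_le_div₀ (by linarith) (by linarith) (by linarith) (by linarith)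
  have hlowpos : 0 < (t ^ α / 2) / t ^ 2 := by positivity
  have hmono : Real.log ((t ^ α / 2) / t ^ 2) ≤ Real.log (hfun α t) :=
    Real.log_le_log hlowpos hlow
  have hlog : Real.log ((t ^ α / 2) / t ^ 2)
      = α * Real.log t - Real.log 2 - 2 * Real.log t := by
    rw [Real.log_div (by positivity) (by positivity), Real.log_div (by positivity) (by norm_num),
      Real.log_rpow ht0, Real.log_pow]
    push_cast; ring
  have hαlog : 0 ≤ α * Real.log t := mul_nonneg hα.1.le (Real.log_nonneg ht1.le)
  rw [hlog] at hmono
  linarith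

/-- **The integral in the exponent of `γ` is well-defined and nonpositive.**
The ratio `(1 − r^α s^α)/(1 − r² s²)` extends continuously across the removable singularity
at `r = 1/s` with value `α/2`, the integrand `(1+r²)⁻¹ log((1 − r^α s^α)/(1 − r²s²))` is
integrable on `(0,∞)`, and the integral is `≤ 0`. -/
theorem exponent_integral_wellDefined (α : ℝ) (hα : α ∈ Set.Ioo (0 : ℝ) 2)
    (s : ℝ) (hs : 0 < s) :
    Filter.Tendsto (fun r : ℝ => (1 - r ^ α * s ^ α) / (1 - r ^ 2 * s ^ 2))
      (nhdsWithin (1 / s) {r : ℝ | r ≠ 1 / s}) (nhds (α / 2)) ∧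
    MeasureTheory.IntegrableOn
      (fun r : ℝ => (1 + r ^ 2)⁻¹ * Real.log ((1 - r ^ α * s ^ α) / (1 - r ^ 2 * s ^ 2)))
      (Set.Ioi 0) volume ∧
    (∫ r in Set.Ioi (0 : ℝ),
      (1 + r ^ 2)⁻¹ * Real.log ((1 - r ^ α * s ^ α) / (1 - r ^ 2 * s ^ 2))) ≤ 0 := by
  obtain ⟨hα0, hα2⟩ := hα
  have hα' : α ∈ Set.Ioo (0 : ℝ) 2 := ⟨hα0, hα2⟩
  have hform : ∀ r : ℝ, 0 ≤ r →
      (1 - r ^ α * s ^ α) / (1 - r ^ 2 * s ^ 2) = (1 - (r * s) ^ α) / (1 - (r * s) ^ 2) := by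
    intro r hr
    rw [Real.mul_rpow hr hs.le, mul_pow]
  -- Part 1 : the limit
  have part1 : Filter.Tendsto (fun r : ℝ => (1 - r ^ α * s ^ α) / (1 - r ^ 2 * s ^ 2))
      (nhdsWithin (1 / s) {r : ℝ | r ≠ 1 / s}) (nhds (α / 2)) := by
    have hmap : Filter.Tendsto (fun r : ℝ => r * s)
        (nhdsWithin (1 / s) {r : ℝ | r ≠ 1 / s}) (nhdsWithin 1 {t : ℝ | t ≠ 1}) := by
      rw [tendsto_nhdsWithin_iff]
      constructor
      · have h := (continuous_mul_right s).tendsto (1 / s)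
        rw [show (1 / s) * s = 1 from div_mul_cancel₀ 1 hs.ne'] at h
        exact h.mono_left nhdsWithin_le_nhds
      · filter_upwards [self_mem_nhdsWithin] with r hr
        exact fun hcon => hr (by rw [eq_div_iff hs.ne']; exact hcon)
    have hcomp := (ratio_tendsto hα').comp hmap
    refine hcomp.congr' ?_
    have hpos : ∀ᶠ r in nhdsWithin (1 / s) {r : ℝ | r ≠ 1 / s}, 0 < r :=
      (eventually_gt_nhds (by positivity)).filter_mono nhdsWithin_le_nhds
    filter_upwards [hpos] with r hr
    exact (hform r hr.le).symm
  -- Part 2 : integrability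
  set G : ℝ → ℝ := fun r => (1 + r ^ 2)⁻¹ * Real.log (hfun α (r * s)) with hG
  have hGcont := G_contOn hα' hs
  set T : ℝ := max 2 (2 ^ (α⁻¹)) with hT
  set R : ℝ := max 1 (T / s) with hRdef
  have hR1 : (1:ℝ) ≤ R := le_max_left _ _
  have hR0 : (0:ℝ) < R := by linarith
  set C : ℝ := Real.log 2 + 2 * |Real.log s| with hC
  have hC0 : 0 ≤ C := by
    have := Real.log_nonneg (by norm_num : (1:ℝ) ≤ 2)
    have := abs_nonneg (Real.log s)
    rw [hC]; linarith
  have hGint : MeasureTheory.IntegrableOn G (Set.Ioi 0) volume := by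
    have hsplit : Set.Ioi (0:ℝ) = Set.Ioc 0 R ∪ Set.Ioi R :=
      (Set.Ioc_union_Ioi_eq_Ioi hR0.le).symm
    rw [hsplit]
    refine MeasureTheory.IntegrableOn.union ?_ ?_
    · exact ((hGcont.mono (fun x hx => hx.1)).integrableOn_Icc).mono_set
        Set.Ioc_subset_Icc_self
    · refine MeasureTheory.Integrable.mono'
        (((integrableOn_Ioi_rpow_of_lt (by norm_num : (-2:ℝ) < -1) hR0).const_mul C).add
          ((integrableOn_Ioi_rpow_of_lt (by norm_num : (-(3/2):ℝ) < -1) hR0).const_mul 4))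
        ((hGcont.mono (fun x hx => (hR0.trans hx).le)).aestronglyMeasurable
          measurableSet_Ioi) ?_
      filter_upwards [MeasureTheory.ae_restrict_mem measurableSet_Ioi] with r hr
      have hr0 : (0:ℝ) < r := hR0.trans hr
      have htT : T ≤ r * s := by
        have h1 : T / s ≤ r := le_trans (le_max_right _ _) hr.le
        calc T = (T / s) * s := (div_mul_cancel₀ T hs.ne').symm
          _ ≤ r * s := mul_le_mul_of_nonneg_right h1 hs.le
      have ht2 : 2 ≤ r * s := le_trans (le_max_left _ _) htT
      have htα : 2 ≤ (r * s) ^ α := by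
        have h1 : (2:ℝ) ^ (α⁻¹) ≤ r * s := le_trans (le_max_right _ _) htT
        have h2 : ((2:ℝ) ^ (α⁻¹)) ^ α ≤ (r * s) ^ α :=
          Real.rpow_le_rpow (by positivity) h1 hα0.le
        rwa [← Real.rpow_mul (by norm_num), inv_mul_cancel₀ hα0.ne', Real.rpow_one] at h2
      have hkey := hfun_tail_bound hα' ht2 htα
      have hlogt : Real.log (r * s) ≤ 2 * r ^ ((2:ℝ)⁻¹) + |Real.log s| := by
        rw [Real.log_mul hr0.ne' hs.ne']
        have e1 : Real.log r = 2 * Real.log (r ^ ((2:ℝ)⁻¹)) := by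
          rw [Real.log_rpow hr0]; ring
        have e2 : Real.log (r ^ ((2:ℝ)⁻¹)) ≤ r ^ ((2:ℝ)⁻¹) :=
          (Real.log_le_sub_one_of_pos (Real.rpow_pos_of_pos hr0 _)).trans (by linarith)
        have e3 : Real.log s ≤ |Real.log s| := le_abs_self _
        linarith
      have hfpos := hfun_pos hα' (mul_nonneg hr0.le hs.le)
      have hfle := hfun_le_one hα' (mul_nonneg hr0.le hs.le)
      have hlognp : Real.log (hfun α (r * s)) ≤ 0 := Real.log_nonpos hfpos.le hfle
      have habs : ‖G r‖ = (1 + r ^ 2)⁻¹ * (-Real.log (hfun α (r * s))) := by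
        rw [hG]
        rw [Real.norm_eq_abs, abs_mul, abs_of_nonneg (by positivity : (0:ℝ) ≤ (1 + r ^ 2)⁻¹),
          abs_of_nonpos hlognp]
      rw [habs]
      have hXbound : -Real.log (hfun α (r * s)) ≤ C + 4 * r ^ ((2:ℝ)⁻¹) := by
        calc -Real.log (hfun α (r * s)) ≤ Real.log 2 + 2 * Real.log (r * s) := hkey
          _ ≤ Real.log 2 + 2 * (2 * r ^ ((2:ℝ)⁻¹) + |Real.log s|) := by linarith
          _ = C + 4 * r ^ ((2:ℝ)⁻¹) := by rw [hC]; ring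
      have hX0 : 0 ≤ -Real.log (hfun α (r * s)) := by linarith
      have hinv : (1 + r ^ 2)⁻¹ ≤ r ^ ((-2:ℝ)) := by
        have e : r ^ ((-2:ℝ)) = (r ^ 2)⁻¹ := by
          rw [show ((-2:ℝ)) = -((2:ℕ):ℝ) by norm_num, Real.rpow_neg hr0.le,
            Real.rpow_natCast]
        rw [e]
        exact inv_anti₀ (by positivity) (by linarith)
      calc (1 + r ^ 2)⁻¹ * -Real.log (hfun α (r * s))
          ≤ r ^ ((-2:ℝ)) * (C + 4 * r ^ ((2:ℝ)⁻¹)) :=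
            mul_le_mul hinv hXbound hX0 (by positivity)
        _ = C * r ^ ((-2:ℝ)) + 4 * r ^ (-(3/2):ℝ) := by
            have e : r ^ ((-2:ℝ)) * r ^ ((2:ℝ)⁻¹) = r ^ (-(3/2):ℝ) := by
              rw [← Real.rpow_add hr0]; norm_num
            rw [← e]; ring
  have haeeq : G =ᵐ[volume.restrict (Set.Ioi 0)]
      (fun r : ℝ => (1 + r ^ 2)⁻¹ * Real.log ((1 - r ^ α * s ^ α) / (1 - r ^ 2 * s ^ 2))) := by
    have hne : ∀ᵐ r : ℝ ∂volume, r ≠ 1 / s := by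
      have h0 : volume ({1 / s} : Set ℝ) = 0 := measure_singleton _
      rw [MeasureTheory.ae_iff]
      convert h0 using 2
      ext x; simp
    filter_upwards [MeasureTheory.ae_restrict_of_ae hne,
      MeasureTheory.ae_restrict_mem measurableSet_Ioi] with r hne' hr
    have hr0 : (0:ℝ) < r := hr
    have hts : r * s ≠ 1 := fun h => hne' (by rw [eq_div_iff hs.ne']; exact h)
    rw [hG]
    rw [hform r hr0.le]
    have : hfun α (r * s) = (1 - (r * s) ^ α) / (1 - (r * s) ^ 2) := by
      simp only [hfun]; rw [if_neg hts]
    simp only [this]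
  have part2 : MeasureTheory.IntegrableOn
      (fun r : ℝ => (1 + r ^ 2)⁻¹ * Real.log ((1 - r ^ α * s ^ α) / (1 - r ^ 2 * s ^ 2)))
      (Set.Ioi 0) volume := hGint.congr haeeq
  have part3 : (∫ r in Set.Ioi (0 : ℝ),
      (1 + r ^ 2)⁻¹ * Real.log ((1 - r ^ α * s ^ α) / (1 - r ^ 2 * s ^ 2))) ≤ 0 := by
    refine MeasureTheory.setIntegral_nonpos measurableSet_Ioi ?_
    intro r hr
    have hr0 : (0:ℝ) < r := hr
    have hm := ratio_mem' hα' (mul_nonneg hr0.le hs.le)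
    rw [hform r hr0.le]
    exact mul_nonpos_of_nonneg_of_nonpos (by positivity) (Real.log_nonpos hm.1 hm.2)
  exact ⟨part1, part2, part3⟩
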